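/- arXiv:2605.28610 — 3 statements merged into one kernel-verified Lean document; each statement's English description precedes it below -/
import Mathlib

section
/- For every integer p ≥ 1 and every complex number s with Re s > 1, ζ(s) = ((s)_p / (p−1)!) · ∫_{1}^{∞} ( ∑_{n=1}^{⌊x⌋} (x−n)^{p−1} ) / x^{s+p} dx, where the inner sum over n runs over the positive integers n ≤ x. -/
/-!
Writing `∑_{1 ≤ n ≤ x} (x - n)^k` as `∑_{n ≥ 1} 𝟙_{x ≥ n} (x - n)^k`, the integral becomes, after
swapping sum and integral (legitimate by absolute convergence for `Re s > 1`), the sum over `n` of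
`∫_n^∞ (x - n)^k x^{-s-k-1} dx`. Integrating by parts gives `(s + k) I_k = k I_{k-1}` for these
integrals, and `I_0 = n^{-s} / s`, so `I_k = k! n^{-s} / (s)_{k+1}`; summing over `n` yields
`k! ζ(s) / (s)_{k+1}`.
-/

open MeasureTheory Set Filter Topology
open scoped Nat

section SubPowMulCpow

variable {c x : ℝ} {k : ℕ} {a : ℂ}

lemma norm_sub_pow_mul_cpow_le (hc : 0 ≤ c) (hcx : c < x) :
    ‖((x : ℂ) - c) ^ k * (x : ℂ) ^ a‖ ≤ x ^ ((k : ℝ) + a.re) := by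
  have hx : 0 < x := hc.trans_lt hcx
  rw [norm_mul, norm_pow, ← Complex.ofReal_sub, Complex.norm_real,
    Real.norm_of_nonneg (sub_nonneg.2 hcx.le), Complex.norm_cpow_eq_rpow_re_of_pos hx,
    Real.rpow_add hx, Real.rpow_natCast]
  gcongr
  linarith

lemma integrableOn_Ioi_sub_pow_mul_cpow (hc : 0 < c) (h : (k : ℝ) + a.re < -1) :
    IntegrableOn (fun x : ℝ ↦ ((x : ℂ) - c) ^ k * (x : ℂ) ^ a) (Ioi c) := by
  refine (integrableOn_Ioi_rpow_of_lt h hc).mono' ?_ ?_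
  · refine ContinuousOn.aestronglyMeasurable (fun x hx ↦ ?_) measurableSet_Ioi
    exact ((by fun_prop : Continuous fun x : ℝ ↦ ((x : ℂ) - c) ^ k).continuousAt.mul
      (Complex.continuousAt_ofReal_cpow_const x a (Or.inr (hc.trans hx).ne'))).continuousWithinAt
  · filter_upwards [ae_restrict_mem measurableSet_Ioi] with x hx
    exact norm_sub_pow_mul_cpow_le hc.le hx

lemma tendsto_sub_pow_mul_cpow_atTop (hc : 0 ≤ c) (h : (k : ℝ) + a.re < 0) :
    Tendsto (fun x : ℝ ↦ ((x : ℂ) - c) ^ k * (x : ℂ) ^ a) atTop (𝓝 0) := by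
  refine squeeze_zero_norm' ?_ (by simpa using tendsto_rpow_neg_atTop (neg_pos.2 h))
  filter_upwards [eventually_gt_atTop c] with x hx
  exact norm_sub_pow_mul_cpow_le hc hx

lemma integral_Ioi_sub_pow_succ_mul_cpow (hc : 0 < c) (h : (k : ℝ) + a.re < -1) :
    -a * ∫ x in Ioi c, ((x : ℂ) - c) ^ (k + 1) * (x : ℂ) ^ (a - 1) =
      (k + 1) * ∫ x in Ioi c, ((x : ℂ) - c) ^ k * (x : ℂ) ^ a := by
  have ha : a ≠ 0 := by
    rintro rfl
    simp only [Complex.zero_re, add_zero] at h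
    linarith [k.cast_nonneg (α := ℝ)]
  have hk : ((k + 1 : ℕ) : ℝ) + (a - 1).re < -1 := by
    simp only [Nat.cast_add, Nat.cast_one, Complex.sub_re, Complex.one_re]
    linarith
  have hint := integrableOn_Ioi_sub_pow_mul_cpow hc h
  have hint' := integrableOn_Ioi_sub_pow_mul_cpow hc hk
  have hderiv : ∀ x ∈ Ioi c, HasDerivAt (fun x : ℝ ↦ ((x : ℂ) - c) ^ (k + 1) * (x : ℂ) ^ a)
      ((k + 1) * (((x : ℂ) - c) ^ k * (x : ℂ) ^ a) +
        a * (((x : ℂ) - c) ^ (k + 1) * (x : ℂ) ^ (a - 1))) x := by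
    intro x hx
    have hpow : HasDerivAt (fun x : ℝ ↦ ((x : ℂ) - c) ^ (k + 1))
        ((k + 1 : ℕ) * ((x : ℂ) - c) ^ k) x := by
      simpa using (((hasDerivAt_id (x : ℂ)).sub_const (c : ℂ)).pow (k + 1)).comp_ofReal
    exact (hpow.mul (hasDerivAt_ofReal_cpow_const (hc.trans hx).ne' ha)).congr_deriv
      (by push_cast; ring)
  have hcont : ContinuousWithinAt (fun x : ℝ ↦ ((x : ℂ) - c) ^ (k + 1) * (x : ℂ) ^ a) (Ici c) c :=
    ((by fun_prop : Continuous fun x : ℝ ↦ ((x : ℂ) - c) ^ (k + 1)).continuousAt.mul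
      (Complex.continuousAt_ofReal_cpow_const c a (Or.inr hc.ne'))).continuousWithinAt
  have hparts := integral_Ioi_of_hasDerivAt_of_tendsto hcont hderiv
    ((hint.const_mul _).add (hint'.const_mul _))
    (tendsto_sub_pow_mul_cpow_atTop hc.le (by push_cast; linarith))
  rw [integral_add (hint.const_mul _) (hint'.const_mul _), integral_const_mul,
    integral_const_mul] at hparts
  simp only [sub_self, zero_pow k.succ_ne_zero, zero_mul] at hparts
  linear_combination -hparts

end SubPowMulCpow

lemma ascPochhammer_eval_ne_zero_of_re_pos {s : ℂ} (hs : 0 < s.re) (n : ℕ) :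
    (ascPochhammer ℂ n).eval s ≠ 0 := by
  rw [Ne, ascPochhammer_eval_eq_zero_iff]
  rintro ⟨j, -, hj⟩
  have := congrArg Complex.re hj
  simp only [Complex.natCast_re, Complex.neg_re] at this
  linarith [j.cast_nonneg (α := ℝ)]

/-- The `n = c` term of the Riesz sum `∑_{n ≤ x} (x - n)^k`, divided by `x^(s + k + 1)`. -/
noncomputable def rieszKernel (k : ℕ) (s : ℂ) (c x : ℝ) : ℂ :=
  ((x : ℂ) - c) ^ k * (x : ℂ) ^ (-s - k - 1)

section RieszKernel

variable {s : ℂ} {c : ℝ}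

lemma integrableOn_Ioi_rieszKernel (hs : 0 < s.re) (hc : 0 < c) (k : ℕ) :
    IntegrableOn (rieszKernel k s c) (Ioi c) :=
  integrableOn_Ioi_sub_pow_mul_cpow hc (by simp; linarith)

lemma ascPochhammer_eval_mul_integral_rieszKernel (hs : 0 < s.re) (hc : 0 < c) (k : ℕ) :
    (ascPochhammer ℂ (k + 1)).eval s * ∫ x in Ioi c, rieszKernel k s c x =
      k ! * (c : ℂ) ^ (-s) := by
  induction k with
  | zero =>
    have hs0 : s ≠ 0 := by rintro rfl; simp at hs
    simp only [rieszKernel, pow_zero, one_mul, Nat.cast_zero, sub_zero, Nat.factorial_zero,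
      Nat.cast_one, zero_add, ascPochhammer_one, Polynomial.eval_X]
    rw [integral_Ioi_cpow_of_lt (by simp; linarith) hc, sub_add_cancel]
    field_simp
  | succ k ih =>
    have hrec := integral_Ioi_sub_pow_succ_mul_cpow (k := k) (a := -s - k - 1) hc
      (by simp; linarith)
    rw [ascPochhammer_succ_eval, Nat.factorial_succ, Nat.cast_mul]
    simp only [rieszKernel, Nat.cast_add, Nat.cast_one, sub_add_eq_sub_sub] at ih ⊢
    linear_combination (ascPochhammer ℂ (k + 1)).eval s * hrec + ((k : ℂ) + 1) * ih

lemma integral_Ioi_rieszKernel (hs : 0 < s.re) (hc : 0 < c) (k : ℕ) :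
    ∫ x in Ioi c, rieszKernel k s c x =
      k ! / (ascPochhammer ℂ (k + 1)).eval s * (c : ℂ) ^ (-s) := by
  rw [div_mul_eq_mul_div, eq_div_iff (ascPochhammer_eval_ne_zero_of_re_pos hs _), mul_comm,
    ascPochhammer_eval_mul_integral_rieszKernel hs hc]

lemma integral_Ioi_norm_rieszKernel_le (hs : 0 < s.re) (hc : 0 < c) (k : ℕ) :
    ∫ x in Ioi c, ‖rieszKernel k s c x‖ ≤ c ^ (-s.re) / s.re :=
  calc ∫ x in Ioi c, ‖rieszKernel k s c x‖
      ≤ ∫ x in Ioi c, x ^ (-s.re - 1) := by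
        refine setIntegral_mono_on (integrableOn_Ioi_rieszKernel hs hc k).norm
          (integrableOn_Ioi_rpow_of_lt (by linarith) hc) measurableSet_Ioi fun x hx ↦ ?_
        refine (norm_sub_pow_mul_cpow_le hc.le hx).trans_eq ?_
        congr 1
        simp only [Complex.sub_re, Complex.neg_re, Complex.natCast_re, Complex.one_re]
        ring
    _ = c ^ (-s.re) / s.re := by
        rw [integral_Ioi_rpow_of_lt (by linarith) hc, sub_add_cancel, neg_div_neg_eq]

end RieszKernel

lemma setIntegral_Ioi_indicator_Ici {E : Type*} [NormedAddCommGroup E] [NormedSpace ℝ E]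
    {f : ℝ → E} {a c : ℝ} (hac : a ≤ c) :
    ∫ x in Ioi a, (Ici c).indicator f x = ∫ x in Ioi c, f x := by
  rw [setIntegral_indicator measurableSet_Ici]
  refine setIntegral_congr_set ?_
  have := (EventuallyEq.refl (ae volume) (Ioi a)).inter (Ioi_ae_eq_Ici (a := c)).symm
  rwa [Ioi_inter_Ioi, max_eq_right hac] at this

lemma sum_Icc_one_floor_eq_tsum_indicator {M : Type*} [AddCommMonoid M] [TopologicalSpace M]
    (g : ℝ → ℝ → M) (x : ℝ) :
    ∑ n ∈ Finset.Icc 1 ⌊x⌋, g n x =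
      ∑' n : ℕ, (Ici ((n : ℝ) + 1)).indicator (g ((n : ℝ) + 1)) x := by
  have hmem (n : ℕ) : (n : ℝ) + 1 ≤ x ↔ n < ⌊x⌋.toNat := by
    rw [show (n : ℝ) + 1 = ((n + 1 : ℤ) : ℝ) by push_cast; ring, ← Int.le_floor]
    omega
  rw [tsum_eq_sum (s := Finset.range ⌊x⌋.toNat) fun n hn ↦ indicator_of_notMem
    (by simpa [hmem] using hn) _]
  refine (Finset.sum_nbij' (fun n ↦ (n - 1).toNat) (fun n : ℕ ↦ (n : ℤ) + 1) ?_ ?_ ?_ ?_ ?_).trans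
    (Finset.sum_congr rfl fun n hn ↦ (indicator_of_mem ((hmem n).2 (by simpa using hn)) _).symm)
  all_goals intro n hn; simp only [Finset.mem_Icc, Finset.mem_range] at hn ⊢
  any_goals omega
  rw [← Int.cast_natCast, Int.toNat_of_nonneg (by omega), Int.cast_sub, Int.cast_one,
    sub_add_cancel]

lemma integral_Ioi_one_tsum_indicator_rieszKernel {s : ℂ} (hs : 1 < s.re) (k : ℕ) :
    ∫ x in Ioi (1 : ℝ), ∑' n : ℕ, (Ici ((n : ℝ) + 1)).indicator (rieszKernel k s ((n : ℝ) + 1)) x =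
      k ! / (ascPochhammer ℂ (k + 1)).eval s * riemannZeta s := by
  have hs0 : 0 < s.re := by linarith
  have hc (n : ℕ) : (0 : ℝ) < n + 1 := by positivity
  have h1c (n : ℕ) : (1 : ℝ) ≤ n + 1 := by simp
  have hint (n : ℕ) : Integrable ((Ici ((n : ℝ) + 1)).indicator (rieszKernel k s ((n : ℝ) + 1)))
      (volume.restrict (Ioi 1)) :=
    ((Iff.mpr integrableOn_Ici_iff_integrableOn_Ioi (integrableOn_Ioi_rieszKernel hs0 (hc n) k)
      ).integrable_indicator measurableSet_Ici).integrableOn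
  have hsum : Summable fun n : ℕ ↦
      ∫ x in Ioi (1 : ℝ), ‖(Ici ((n : ℝ) + 1)).indicator (rieszKernel k s ((n : ℝ) + 1)) x‖ := by
    refine .of_nonneg_of_le (fun n ↦ integral_nonneg fun x ↦ norm_nonneg _) (fun n ↦ ?_)
      (((summable_nat_add_iff 1).2 (Real.summable_nat_rpow.2 (neg_lt_neg hs))).div_const s.re)
    simp_rw [norm_indicator_eq_indicator_norm]
    rw [setIntegral_Ioi_indicator_Ici (h1c n)]
    exact_mod_cast integral_Ioi_norm_rieszKernel_le hs0 (hc n) k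
  rw [← integral_tsum_of_summable_integral_norm hint hsum, zeta_eq_tsum_one_div_nat_add_one_cpow hs,
    ← tsum_mul_left]
  refine tsum_congr fun n ↦ ?_
  rw [setIntegral_Ioi_indicator_Ici (h1c n), integral_Ioi_rieszKernel hs0 (hc n), one_div,
    ← Complex.cpow_neg]
  norm_cast

theorem zeta_eq_pochhammer_integral (p : ℕ) (hp : 1 ≤ p) (s : ℂ) (hs : 1 < s.re) :
    riemannZeta s =
      (ascPochhammer ℂ p).eval s / ((p - 1).factorial : ℂ) *
        ∫ x in Set.Ioi (1 : ℝ),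
          (∑ n ∈ Finset.Icc 1 ⌊x⌋, ((x : ℂ) - (n : ℂ)) ^ (p - 1)) / (x : ℂ) ^ (s + p) := by
  obtain ⟨k, rfl⟩ : ∃ k, p = k + 1 := ⟨p - 1, by omega⟩
  have hsum (x : ℝ) :
      (∑ n ∈ Finset.Icc 1 ⌊x⌋, ((x : ℂ) - (n : ℂ)) ^ k) / (x : ℂ) ^ (s + (k + 1 : ℕ)) =
        ∑' n : ℕ, (Ici ((n : ℝ) + 1)).indicator (rieszKernel k s ((n : ℝ) + 1)) x := by
    rw [← sum_Icc_one_floor_eq_tsum_indicator, Finset.sum_div]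
    refine Finset.sum_congr rfl fun n _ ↦ ?_
    rw [rieszKernel, div_eq_mul_inv, ← Complex.cpow_neg,
      show -s - k - 1 = -(s + (k + 1 : ℕ)) by push_cast; ring]
    norm_cast
  simp_rw [Nat.add_sub_cancel, hsum, integral_Ioi_one_tsum_indicator_rieszKernel hs]
  have hpoch := ascPochhammer_eval_ne_zero_of_re_pos (s := s) (by linarith) (k + 1)
  have hfact := k.factorial_ne_zero
  field_simp
end

section
/- For every complex number s with Re s > 0 and s ≠ 1, ∑_{k=0}^{∞} ( (s)_k / (k+1)! ) · (ζ(s+k) − 1) = 1/(s−1), where (s)_k is the ascending Pochhammer symbol. -/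
/-! For `re s > 1` expand `ζ(s + k) - 1 = ∑_{n ≥ 0} (n + 2)^{-(s+k)}` and sum over `k` first: by the
binomial series `(1 - x)^{1-s} = ∑_k (s - 1)_k x^k / k!` at `x = 1 / (n + 2)`, the inner sum is
`((n + 1)^{1-s} - (n + 2)^{1-s}) / (s - 1)`, and these telescope to `1 / (s - 1)`; the double
series converges absolutely, which justifies the interchange. For `k ≥ 2` the terms are bounded
by `(R)_k / k! · 2^{-k}` locally uniformly on `re s > 0`, so the left-hand side is holomorphic
on `{re s > 0} \ {1}`, a connected set, and the identity theorem extends the equality. -/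

open Complex Filter Topology Metric
open scoped Nat

theorem Ring.choose_add_sub_one_eq_ascPochhammer_div_factorial {K : Type*} [Field K]
    [CharZero K] (a : K) (n : ℕ) :
    Ring.choose (a + n - 1) n = (ascPochhammer K n).eval a / n ! := by
  rw [Ring.choose_eq_smul, Polynomial.descPochhammer_smeval_eq_ascPochhammer,
    Polynomial.ascPochhammer_smeval_cast, Polynomial.ascPochhammer_smeval_eq_eval, smul_eq_mul,
    inv_mul_eq_div]
  ring_nf

theorem ascPochhammer_eval_sub_one_succ {R : Type*} [CommRing R] (a : R) (n : ℕ) :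
    (ascPochhammer R (n + 1)).eval (a - 1) = (a - 1) * (ascPochhammer R n).eval a := by
  simp [ascPochhammer_succ_left, Polynomial.eval_comp]

theorem norm_ascPochhammer_eval_le {A : Type*} [SeminormedCommRing A] [NormOneClass A] {a : A}
    {R : ℝ} (h : ‖a‖ ≤ R) (n : ℕ) :
    ‖(ascPochhammer A n).eval a‖ ≤ (ascPochhammer ℝ n).eval R := by
  induction n with
  | zero => simp
  | succ n ih =>
    rw [ascPochhammer_succ_eval, ascPochhammer_succ_eval]
    refine (norm_mul_le _ _).trans (mul_le_mul ih ?_ (norm_nonneg _) ((norm_nonneg _).trans ih))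
    exact (norm_add_le _ _).trans (add_le_add h (by simpa using Nat.norm_cast_le (α := A) n))

theorem norm_ascPochhammer_div_factorial_succ_le {s : ℂ} {R : ℝ} (h : ‖s‖ ≤ R) (k : ℕ) :
    ‖(ascPochhammer ℂ k).eval s / (k + 1)!‖ ≤ (ascPochhammer ℝ k).eval R / k ! := by
  have hR := norm_ascPochhammer_eval_le h k
  rw [norm_div, norm_natCast]
  gcongr
  · exact (norm_nonneg _).trans hR
  · exact k.le_succ

theorem Complex.hasSum_ascPochhammer_div_factorial_mul_pow (a : ℂ) {x : ℂ} (hx : ‖x‖ < 1) :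
    HasSum (fun n ↦ (ascPochhammer ℂ n).eval a / n ! * x ^ n) ((1 - x) ^ (-a)) := by
  have := (one_div_one_sub_cpow_hasFPowerSeriesOnBall_zero a).hasSum (y := x)
    (by simpa [← ofReal_norm] using hx)
  simpa [FormalMultilinearSeries.ofScalars_apply_eq, cpow_neg, mul_comm,
    Ring.choose_add_sub_one_eq_ascPochhammer_div_factorial] using this

theorem Real.summable_ascPochhammer_div_factorial_mul_pow (a : ℝ) {x : ℝ} (hx : |x| < 1) :
    Summable (fun n ↦ (ascPochhammer ℝ n).eval a / n ! * x ^ n) := by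
  have := (Real.one_div_one_sub_rpow_hasFPowerSeriesOnBall_zero a).hasSum (y := x)
    (by rw [Metric.mem_eball, edist_zero_right, ← ofReal_norm]; simpa using hx)
  simpa [FormalMultilinearSeries.ofScalars_apply_eq, mul_comm,
    Ring.choose_add_sub_one_eq_ascPochhammer_div_factorial] using this.summable

/-- The Taylor expansion of `t ↦ t^{1-s}` at `a + 1`, evaluated at `a`. -/
theorem hasSum_ascPochhammer_div_factorial_mul_cpow (s : ℂ) (hs : s ≠ 1) {a : ℝ} (ha : 0 < a) :
    HasSum (fun k : ℕ ↦ (ascPochhammer ℂ k).eval s / (k + 1)! * ((a : ℂ) + 1) ^ (-(s + k)))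
      (((a : ℂ) ^ (1 - s) - ((a : ℂ) + 1) ^ (1 - s)) / (s - 1)) := by
  have hb : (a : ℂ) + 1 = ((a + 1 : ℝ) : ℂ) := by push_cast; rfl
  have hb0 : (a : ℂ) + 1 ≠ 0 := by rw [hb]; exact_mod_cast (by positivity : a + 1 ≠ 0)
  have hc0 : ((a : ℂ) + 1) ^ (1 - s) ≠ 0 := cpow_ne_zero_iff.mpr (Or.inl hb0)
  have hs1 : s - 1 ≠ 0 := sub_ne_zero.mpr hs
  set x : ℂ := ((a : ℂ) + 1)⁻¹
  have hx : ‖x‖ < 1 := by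
    rw [norm_inv, hb, norm_real, Real.norm_of_nonneg (by positivity)]
    exact inv_lt_one_of_one_lt₀ (by linarith)
  have H := (hasSum_nat_add_iff' 1).mpr
    (Complex.hasSum_ascPochhammer_div_factorial_mul_pow (s - 1) hx)
  simp only [Finset.range_one, Finset.sum_singleton, ascPochhammer_zero, Polynomial.eval_one,
    Nat.factorial_zero, Nat.cast_one, div_one, pow_zero, mul_one, neg_sub] at H
  have h1x : (1 - x) ^ (1 - s) = (a : ℂ) ^ (1 - s) * (((a : ℂ) + 1) ^ (1 - s))⁻¹ := by
    have : 1 - x = (a : ℂ) * (((a + 1 : ℝ)⁻¹ : ℝ) : ℂ) := by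
      simp only [x]; push_cast; field_simp; ring
    rw [this, mul_cpow_ofReal_nonneg ha.le (by positivity), ofReal_inv, ← hb, inv_cpow]
    rw [hb, arg_ofReal_of_nonneg (by positivity)]
    exact Real.pi_ne_zero.symm
  rw [show ((a : ℂ) ^ (1 - s) - ((a : ℂ) + 1) ^ (1 - s)) / (s - 1)
      = ((a : ℂ) + 1) ^ (1 - s) / (s - 1) * ((1 - x) ^ (1 - s) - 1) by rw [h1x]; field_simp]
  refine (H.mul_left _).congr_fun fun k ↦ ?_
  have hpow : ((a : ℂ) + 1) ^ (-(s + k)) = ((a : ℂ) + 1) ^ (1 - s) * x ^ (k + 1) := by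
    rw [inv_pow, ← cpow_natCast, ← cpow_neg, ← cpow_add _ _ hb0]
    push_cast
    ring_nf
  rw [ascPochhammer_eval_sub_one_succ, hpow]
  field_simp

theorem rpow_neg_le_half_pow_mul_rpow_neg {y σ τ : ℝ} {k : ℕ} (hy : 2 ≤ y) (h : τ + k ≤ σ) :
    y ^ (-σ) ≤ (1 / 2) ^ k * y ^ (-τ) := by
  have hy0 : 0 < y := by linarith
  calc y ^ (-σ) ≤ y ^ (-(τ + k)) := Real.rpow_le_rpow_of_exponent_le (by linarith) (by linarith)
    _ = (y ^ k)⁻¹ * y ^ (-τ) := by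
      rw [neg_add, Real.rpow_add hy0, Real.rpow_neg hy0.le (k : ℝ), Real.rpow_natCast, mul_comm]
    _ ≤ (1 / 2) ^ k * y ^ (-τ) := by
      rw [one_div, inv_pow]
      gcongr

theorem summable_natCast_add_two_rpow_neg {σ : ℝ} (h : 1 < σ) :
    Summable fun n : ℕ ↦ ((n : ℝ) + 2) ^ (-σ) :=
  ((Real.summable_one_div_nat_add_rpow 2 σ).mpr h).congr fun n ↦ by
    rw [abs_of_pos (by positivity), Real.rpow_neg (by positivity), one_div]

theorem norm_natCast_add_two_cpow (n : ℕ) (w : ℂ) :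
    ‖((n : ℂ) + 2) ^ w‖ = ((n : ℝ) + 2) ^ w.re := by
  exact_mod_cast norm_natCast_cpow_of_pos (by omega : 0 < n + 2) w

theorem hasSum_riemannZeta_sub_one {w : ℂ} (hw : 1 < w.re) :
    HasSum (fun n : ℕ ↦ ((n : ℂ) + 2) ^ (-w)) (riemannZeta w - 1) := by
  have h := (Complex.summable_one_div_nat_cpow.mpr hw).hasSum
  rw [← zeta_eq_tsum_one_div_nat_cpow hw, ← hasSum_nat_add_iff' 2] at h
  simpa [Finset.sum_range_succ, zero_cpow (Complex.ne_zero_of_one_lt_re hw), cpow_neg, add_assoc,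
    one_add_one_eq_two] using h

theorem norm_riemannZeta_sub_one_le {w : ℂ} {k : ℕ} (hw : 2 + k ≤ w.re) :
    ‖riemannZeta w - 1‖ ≤ (1 / 2) ^ k * ∑' n : ℕ, ((n : ℝ) + 2) ^ (-2 : ℝ) := by
  refine (hasSum_riemannZeta_sub_one (by linarith [k.cast_nonneg (α := ℝ)])).norm_le_of_bounded
    ((summable_natCast_add_two_rpow_neg one_lt_two).hasSum.mul_left _) fun n ↦ ?_
  rw [norm_natCast_add_two_cpow, neg_re]
  exact rpow_neg_le_half_pow_mul_rpow_neg (by linarith [n.cast_nonneg (α := ℝ)]) hw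

theorem hasSum_sub_succ_of_tendsto_zero {G : Type*} [AddCommGroup G] [TopologicalSpace G]
    [IsTopologicalAddGroup G] [T2Space G] {f : ℕ → G} (hf : Tendsto f atTop (𝓝 0))
    (hs : Summable fun n ↦ f n - f (n + 1)) : HasSum (fun n ↦ f n - f (n + 1)) (f 0) := by
  have h := hs.hasSum.tendsto_sum_nat
  simp only [Finset.sum_range_sub'] at h
  convert hs.hasSum
  exact tendsto_nhds_unique (by simpa using tendsto_const_nhds.sub hf) h

noncomputable def pochhammerZetaTerm (s : ℂ) (k : ℕ) : ℂ :=
  (ascPochhammer ℂ k).eval s / (k + 1)! * (riemannZeta (s + k) - 1)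

theorem summable_uncurry_ascPochhammer_div_factorial_mul_cpow {s : ℂ} (hs : 1 < s.re) :
    Summable (Function.uncurry fun k n : ℕ ↦
      (ascPochhammer ℂ k).eval s / (k + 1)! * ((n : ℂ) + 2) ^ (-(s + k))) := by
  have hcoef := Real.summable_ascPochhammer_div_factorial_mul_pow ‖s‖ (x := 1 / 2)
    (by norm_num [abs_of_pos])
  have hbound (k : ℕ) := norm_ascPochhammer_div_factorial_succ_le (le_refl ‖s‖) k
  refine .of_norm_bounded (hcoef.mul_of_nonneg (summable_natCast_add_two_rpow_neg hs)
    (fun k ↦ mul_nonneg ((norm_nonneg _).trans (hbound k)) (by positivity))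
    fun n ↦ by positivity) fun ⟨k, n⟩ ↦ ?_
  simp only [Function.uncurry_apply_pair, norm_mul, norm_natCast_add_two_cpow, neg_re, add_re,
    natCast_re, mul_assoc]
  exact mul_le_mul (hbound k)
    (rpow_neg_le_half_pow_mul_rpow_neg (by linarith [n.cast_nonneg (α := ℝ)]) le_rfl)
    (by positivity) ((norm_nonneg _).trans (hbound k))

theorem tsum_pochhammerZetaTerm_of_one_lt_re {s : ℂ} (hs : 1 < s.re) :
    ∑' k, pochhammerZetaTerm s k = 1 / (s - 1) := by
  have hs1 : s ≠ 1 := by rintro rfl; simp at hs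
  set T : ℕ → ℕ → ℂ := fun k n ↦
    (ascPochhammer ℂ k).eval s / (k + 1)! * ((n : ℂ) + 2) ^ (-(s + k))
  have hT := summable_uncurry_ascPochhammer_div_factorial_mul_cpow hs
  have hrow (k : ℕ) : HasSum (T k) (pochhammerZetaTerm s k) := by
    refine (hasSum_riemannZeta_sub_one ?_).mul_left _
    simp only [add_re, natCast_re]
    linarith [k.cast_nonneg (α := ℝ)]
  have hcol (n : ℕ) :
      HasSum (T · n) ((((n : ℂ) + 1) ^ (1 - s) - ((n : ℂ) + 2) ^ (1 - s)) / (s - 1)) := by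
    have := hasSum_ascPochhammer_div_factorial_mul_cpow s hs1 (a := n + 1) (by positivity)
    push_cast at this
    simpa [T, add_assoc, one_add_one_eq_two] using this
  set f : ℕ → ℂ := fun n ↦ ((n : ℂ) + 1) ^ (1 - s) / (s - 1)
  have hf : Tendsto f atTop (𝓝 0) := by
    have hnorm : Tendsto (fun n : ℕ ↦ ‖((n + 1 : ℕ) : ℂ) ^ (1 - s)‖) atTop (𝓝 0) := by
      simp only [norm_natCast_cpow_of_pos (Nat.succ_pos _), sub_re, one_re, ← neg_sub s.re]
      exact (tendsto_rpow_neg_atTop (by linarith)).comp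
        (tendsto_natCast_atTop_atTop.comp (tendsto_add_atTop_nat 1))
    simpa [f] using (tendsto_zero_iff_norm_tendsto_zero.mpr hnorm).div_const (s - 1)
  have hcol' (n : ℕ) : ∑' k, T k n = f n - f (n + 1) := by
    rw [(hcol n).tsum_eq, sub_div]
    simp only [f]
    push_cast
    ring_nf
  have htel := hasSum_sub_succ_of_tendsto_zero hf (hT.prod_symm.prod.congr hcol')
  calc ∑' k, pochhammerZetaTerm s k
      = ∑' k, ∑' n, T k n := tsum_congr fun k ↦ (hrow k).tsum_eq.symm
    _ = ∑' n, ∑' k, T k n := hT.tsum_comm.symm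
    _ = 1 / (s - 1) := by
      rw [tsum_congr hcol', htel.tsum_eq]
      simp [f]

theorem differentiableAt_pochhammerZetaTerm {s : ℂ} {k : ℕ} (h : s + k ≠ 1) :
    DifferentiableAt ℂ (pochhammerZetaTerm · k) s :=
  ((Polynomial.differentiable _).differentiableAt.div_const _).mul
    (((differentiableAt_riemannZeta h).comp s (differentiableAt_id.add_const _)).sub_const 1)

theorem norm_pochhammerZetaTerm_add_two_le {z : ℂ} (hz : 0 ≤ z.re) {R : ℝ} (hR : ‖z‖ ≤ R)
    (k : ℕ) :
    ‖pochhammerZetaTerm z (k + 2)‖ ≤ (ascPochhammer ℝ (k + 2)).eval R / (k + 2)! *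
      ((1 / 2) ^ k * ∑' n : ℕ, ((n : ℝ) + 2) ^ (-2 : ℝ)) := by
  have hcoef := norm_ascPochhammer_div_factorial_succ_le hR (k + 2)
  rw [pochhammerZetaTerm, norm_mul]
  refine mul_le_mul hcoef (norm_riemannZeta_sub_one_le ?_) (norm_nonneg _)
    ((norm_nonneg _).trans hcoef)
  simp only [Nat.cast_add, Nat.cast_ofNat, add_re, natCast_re, re_ofNat]
  linarith

theorem summable_ascPochhammer_div_factorial_add_two_mul_half_pow (R C : ℝ) :
    Summable fun k : ℕ ↦ (ascPochhammer ℝ (k + 2)).eval R / (k + 2)! * ((1 / 2) ^ k * C) := by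
  have h := (summable_nat_add_iff 2).mpr
    (Real.summable_ascPochhammer_div_factorial_mul_pow R (x := 1 / 2) (by norm_num [abs_of_pos]))
  refine (h.mul_right (4 * C)).congr fun k ↦ ?_
  ring

theorem summable_pochhammerZetaTerm {z : ℂ} (hz : 0 ≤ z.re) : Summable (pochhammerZetaTerm z) :=
  (summable_nat_add_iff 2).mp <| .of_norm_bounded
    (summable_ascPochhammer_div_factorial_add_two_mul_half_pow ‖z‖ _)
    (norm_pochhammerZetaTerm_add_two_le hz le_rfl)

theorem differentiableOn_tsum_pochhammerZetaTerm_add_two :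
    DifferentiableOn ℂ (fun z ↦ ∑' k, pochhammerZetaTerm z (k + 2)) {z | 0 < z.re} := by
  refine differentiableOn_of_locally_differentiableOn fun z₀ _ ↦
    ⟨ball 0 (‖z₀‖ + 1), isOpen_ball, by simp, ?_⟩
  refine differentiableOn_tsum_of_summable_norm
    (summable_ascPochhammer_div_factorial_add_two_mul_half_pow (‖z₀‖ + 1) _) (fun k z hz ↦ ?_)
    ((isOpen_lt continuous_const continuous_re).inter isOpen_ball)
    fun k z hz ↦ norm_pochhammerZetaTerm_add_two_le hz.1.le (mem_ball_zero_iff.mp hz.2).le k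
  have hz₀ : 0 < z.re := hz.1
  refine (differentiableAt_pochhammerZetaTerm (ne_of_apply_ne re ?_)).differentiableWithinAt
  simp only [Nat.cast_add, Nat.cast_ofNat, add_re, natCast_re, re_ofNat, one_re]
  linarith

theorem differentiableAt_tsum_pochhammerZetaTerm {s : ℂ} (hs : 0 < s.re) (hs1 : s ≠ 1) :
    DifferentiableAt ℂ (fun z ↦ ∑' k, pochhammerZetaTerm z k) s := by
  have hH : {z : ℂ | 0 < z.re} ∈ 𝓝 s := (isOpen_lt continuous_const continuous_re).mem_nhds hs
  have hsplit : (fun z ↦ ∑ k ∈ Finset.range 2, pochhammerZetaTerm z k +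
      ∑' k, pochhammerZetaTerm z (k + 2)) =ᶠ[𝓝 s] fun z ↦ ∑' k, pochhammerZetaTerm z k :=
    eventually_of_mem hH fun z hz ↦ (summable_pochhammerZetaTerm hz.le).sum_add_tsum_nat_add 2
  refine hsplit.differentiableAt_iff.mp (.add (.fun_sum fun k _ ↦ ?_)
    (differentiableOn_tsum_pochhammerZetaTerm_add_two.differentiableAt hH))
  refine differentiableAt_pochhammerZetaTerm ?_
  rcases k with _ | k
  · simpa using hs1
  · refine ne_of_apply_ne re ?_
    simp only [Nat.cast_add, Nat.cast_one, add_re, natCast_re, one_re]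
    linarith

theorem starConvex_setOf_re_pos_and_or_im_ne_zero {c : ℝ} (hc : 0 < c) {S : Set ℝ}
    (hS : Convex ℝ S) (hcS : c ∈ S) :
    StarConvex ℝ (c : ℂ) {z : ℂ | 0 < z.re ∧ (z.re ∈ S ∨ z.im ≠ 0)} := by
  rintro z ⟨hz, hzS⟩ a b ha hb hab
  rcases hb.eq_or_lt with rfl | hb
  · rw [add_zero] at hab
    simpa [hab, hc] using hcS
  have hre : (a • (c : ℂ) + b • z).re = a • c + b • z.re := by simp
  have him : (a • (c : ℂ) + b • z).im = b * z.im := by simp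
  rw [Set.mem_ofPred_eq, hre, him]
  exact ⟨add_pos_of_nonneg_of_pos (mul_nonneg ha hc.le) (mul_pos hb hz),
    hzS.imp (fun h ↦ hS hcS h ha hb.le hab) (mul_ne_zero hb.ne')⟩

theorem isPreconnected_re_pos_diff_one : IsPreconnected ({z : ℂ | 0 < z.re} \ {1}) := by
  have h₁ := starConvex_setOf_re_pos_and_or_im_ne_zero (c := 1 / 2) (by norm_num) (convex_Iio 1)
    (by norm_num)
  have h₂ := starConvex_setOf_re_pos_and_or_im_ne_zero two_pos (convex_Ioi 1) (by norm_num)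
  have hU : {z : ℂ | 0 < z.re} \ {1} = {z | 0 < z.re ∧ (z.re ∈ Set.Iio 1 ∨ z.im ≠ 0)} ∪
      {z | 0 < z.re ∧ (z.re ∈ Set.Ioi 1 ∨ z.im ≠ 0)} := by
    ext z
    simp only [Set.mem_sdiff, Set.mem_ofPred_eq, Set.mem_singleton_iff, Set.mem_union,
      Set.mem_Iio, Set.mem_Ioi, Complex.ext_iff, one_re, one_im]
    grind
  rw [hU]
  exact .union (1 + I) (by simp) (by simp)
    (h₁.isPathConnected (by norm_num)).isConnected.isPreconnected
    (h₂.isPathConnected (by norm_num)).isConnected.isPreconnected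

theorem pochhammer_zeta_identity (s : ℂ) (hs : 0 < s.re) (hs1 : s ≠ 1) :
    (∑' k : ℕ, (ascPochhammer ℂ k).eval s / ((k + 1).factorial : ℂ) *
        (riemannZeta (s + k) - 1)) = 1 / (s - 1) := by
  have hU : IsOpen ({z : ℂ | 0 < z.re} \ {1}) :=
    (isOpen_lt continuous_const continuous_re).sdiff isClosed_singleton
  have hF : AnalyticOnNhd ℂ (fun z ↦ ∑' k, pochhammerZetaTerm z k) ({z : ℂ | 0 < z.re} \ {1}) :=
    DifferentiableOn.analyticOnNhd (fun z hz ↦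
      (differentiableAt_tsum_pochhammerZetaTerm hz.1 hz.2).differentiableWithinAt) hU
  have hG : AnalyticOnNhd ℂ (fun z ↦ 1 / (z - 1)) ({z : ℂ | 0 < z.re} \ {1}) :=
    DifferentiableOn.analyticOnNhd (fun z hz ↦ DifferentiableAt.differentiableWithinAt <|
      (differentiableAt_const 1).fun_div (differentiableAt_id.sub_const 1)
        (sub_ne_zero.mpr hz.2)) hU
  have hev : (fun z ↦ ∑' k, pochhammerZetaTerm z k) =ᶠ[𝓝 2] fun z ↦ 1 / (z - 1) :=
    eventually_of_mem ((isOpen_lt continuous_const continuous_re).mem_nhds (by norm_num))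
      fun z hz ↦ tsum_pochhammerZetaTerm_of_one_lt_re hz
  exact hF.eqOn_of_preconnected_of_eventuallyEq hG isPreconnected_re_pos_diff_one
    ⟨by norm_num, by norm_num⟩ hev ⟨hs, hs1⟩
end

section
/- The derivative of the Riemann zeta function at s = 0 satisfies ζ′(0) = −1 + (1/2) · ∑_{k=2}^{∞} ( (k−1) / (k(k+1)) ) · (ζ(k) − 1), the sum running over the integers k ≥ 2. -/
/-!
Write `ζ(j) - 1 = ∑_{n ≥ 2} n^{-j}` and exchange the two sums, which is legitimate because all
terms are nonnegative. For `|x| < 1` the logarithm series gives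
`∑_{j ≥ 2} (j - 1) / (j (j + 1)) x^j = (1 - 2 / x) log (1 - x) - 2`, and at `x = 1 / n` this is
`2 (log s(n - 1) - log s(n))` for the Stirling sequence `s(m) = m! / (√(2m) (m / e)^m)`.
The sum over `n` therefore telescopes to `2 log s(1) - 2 log √π = 2 - log (2π)` by Stirling's
formula, and the classical value `ζ'(0) = -log (2π) / 2` finishes the proof.
-/

open Real Filter Topology Stirling

lemma hasSum_coeff_mul_pow {x : ℝ} (hx₀ : x ≠ 0) (hx : |x| < 1) :
    HasSum (fun k : ℕ => (k + 1) / ((k + 2) * (k + 3)) * x ^ (k + 2))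
      ((1 - 2 / x) * log (1 - x) - 2) := by
  have hlog := Real.hasSum_pow_div_log_of_abs_lt_one hx
  have h₂ : HasSum (fun k : ℕ => x ^ (k + 2) / (k + 2)) (-log (1 - x) - x) := by
    have := (hasSum_nat_add_iff' 1).mpr hlog
    norm_num [add_assoc, one_add_one_eq_two] at this
    exact this
  have h₃ : HasSum (fun k : ℕ => x ^ (k + 3) / (k + 3)) (-log (1 - x) - (x + x ^ 2 / 2)) := by
    have := (hasSum_nat_add_iff' 2).mpr hlog
    norm_num [add_assoc, Finset.sum_range_succ] at this
    exact this
  have hsum := (h₃.mul_left (2 / x)).sub h₂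
  rw [show 2 / x * (-log (1 - x) - (x + x ^ 2 / 2)) - (-log (1 - x) - x) =
    (1 - 2 / x) * log (1 - x) - 2 by field_simp; ring] at hsum
  refine hsum.congr_fun fun k => ?_
  -- partial fractions: `(k + 1) / ((k + 2) * (k + 3)) = 2 / (k + 3) - 1 / (k + 2)`
  field_simp
  ring

lemma two_mul_log_stirlingSeq_sub_succ (n : ℕ) :
    2 * (log (stirlingSeq (n + 1)) - log (stirlingSeq (n + 2))) =
      (2 * n + 3) * log ((n + 2) / (n + 1)) - 2 := by
  simp (disch := positivity) only [log_stirlingSeq_formula, log_div, log_mul, log_exp,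
      Nat.factorial_succ, Nat.cast_mul, Nat.cast_succ, add_assoc, one_add_one_eq_two]
  push_cast
  ring

lemma hasSum_coeff_mul_inv_pow (n : ℕ) :
    HasSum (fun k : ℕ => ((k : ℝ) + 1) / ((k + 2) * (k + 3)) * ((n : ℝ) + 2)⁻¹ ^ (k + 2))
      (2 * (log (stirlingSeq (n + 1)) - log (stirlingSeq (n + 2)))) := by
  have hn : |((n : ℝ) + 2)⁻¹| < 1 := by
    rw [abs_inv, abs_of_pos (by positivity)]
    exact inv_lt_one_of_one_lt₀ (by linarith [n.cast_nonneg (α := ℝ)])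
  have hval : (1 - 2 / ((n : ℝ) + 2)⁻¹) * log (1 - ((n : ℝ) + 2)⁻¹) =
      (2 * n + 3) * log ((n + 2) / (n + 1)) := by
    rw [show 1 - ((n : ℝ) + 2)⁻¹ = (((n : ℝ) + 2) / (n + 1))⁻¹ by field_simp; ring, log_inv,
      div_inv_eq_mul]
    ring
  have := hasSum_coeff_mul_pow (inv_ne_zero (by positivity)) hn
  rwa [hval, ← two_mul_log_stirlingSeq_sub_succ] at this

lemma hasSum_sub_succ_of_antitone {f : ℕ → ℝ} {l : ℝ} (hf : Antitone f)
    (hl : Tendsto f atTop (𝓝 l)) : HasSum (fun n => f n - f (n + 1)) (f 0 - l) := by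
  rw [hasSum_iff_tendsto_nat_of_nonneg (fun n => sub_nonneg.mpr (hf n.le_succ))]
  simp_rw [Finset.sum_range_sub']
  exact tendsto_const_nhds.sub hl

lemma hasSum_two_mul_log_stirlingSeq_sub_succ :
    HasSum (fun n : ℕ => 2 * (log (stirlingSeq (n + 1)) - log (stirlingSeq (n + 2))))
      (2 - log (2 * π)) := by
  have hlim : Tendsto (fun n : ℕ => log (stirlingSeq (n + 1))) atTop (𝓝 (log √π)) :=
    ((continuousAt_log (by positivity)).tendsto.comp tendsto_stirlingSeq_sqrt_pi).comp
      (tendsto_add_atTop_nat 1)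
  have hval : 2 * (log (stirlingSeq 1) - log √π) = 2 - log (2 * π) := by
    simp (disch := positivity) only [stirlingSeq_one, log_div, log_exp, log_sqrt, log_mul]
    ring
  rw [← hval]
  exact (hasSum_sub_succ_of_antitone log_stirlingSeq'_antitone hlim).mul_left 2

lemma hasSum_swap_fiberwise_of_nonneg {α β : Type*} {f : α × β → ℝ} (hf : 0 ≤ f) {g : α → ℝ}
    {h : β → ℝ} {a : ℝ} (hg : ∀ x, HasSum (fun y => f (x, y)) (g x)) (ha : HasSum g a)
    (hh : ∀ y, HasSum (fun x => f (x, y)) (h y)) : HasSum h a := by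
  have hsum : Summable f := (summable_prod_of_nonneg hf).mpr
    ⟨fun x => (hg x).summable, ha.summable.congr fun x => (hg x).tsum_eq.symm⟩
  have hfa : HasSum f a := (hsum.hasSum.prod_fiberwise hg).unique ha ▸ hsum.hasSum
  exact ((Equiv.prodComm β α).hasSum_iff.mpr hfa).prod_fiberwise hh

lemma hasSum_coeff_mul_tsum_inv_pow :
    HasSum (fun k : ℕ => ((k : ℝ) + 1) / ((k + 2) * (k + 3)) *
      ∑' n : ℕ, ((n : ℝ) + 2)⁻¹ ^ (k + 2)) (2 - log (2 * π)) := by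
  refine hasSum_swap_fiberwise_of_nonneg (f := fun p : ℕ × ℕ =>
      ((p.2 : ℝ) + 1) / ((p.2 + 2) * (p.2 + 3)) * ((p.1 : ℝ) + 2)⁻¹ ^ (p.2 + 2))
    (fun p => by positivity) hasSum_coeff_mul_inv_pow hasSum_two_mul_log_stirlingSeq_sub_succ
    fun k => ?_
  have hsum : Summable fun n : ℕ => ((n : ℝ) + 2)⁻¹ ^ (k + 2) := by
    simpa [inv_pow] using (summable_nat_add_iff 2).mpr
      (Real.summable_one_div_nat_pow.mpr (by omega : 1 < k + 2))
  exact hsum.hasSum.mul_left _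

lemma riemannZeta_nat_add_two_sub_one (k : ℕ) :
    riemannZeta ((k : ℂ) + 2) - 1 = ((∑' n : ℕ, ((n : ℝ) + 2)⁻¹ ^ (k + 2) : ℝ) : ℂ) := by
  have hsum : Summable fun n : ℕ => 1 / (n : ℝ) ^ (k + 2) :=
    Real.summable_one_div_nat_pow.mpr (by omega)
  have hz : riemannZeta ((k : ℂ) + 2) = ((∑' n : ℕ, 1 / (n : ℝ) ^ (k + 2) : ℝ) : ℂ) := by
    simpa [Complex.ofReal_tsum] using zeta_nat_eq_tsum_of_gt_one (k := k + 2) (by omega)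
  rw [hz, ← hsum.sum_add_tsum_nat_add 2]
  simp [Finset.sum_range_succ, inv_pow]

theorem deriv_zeta_zero_series :
    deriv riemannZeta 0 =
      -1 + (1 / 2) * ∑' k : ℕ, (((k : ℂ) + 2) - 1) / (((k : ℂ) + 2) * ((k : ℂ) + 3)) *
        (riemannZeta ((k : ℂ) + 2) - 1) := by
  have hterm (k : ℕ) : (((k : ℂ) + 2) - 1) / (((k : ℂ) + 2) * ((k : ℂ) + 3)) *
      (riemannZeta ((k : ℂ) + 2) - 1) = ((((k : ℝ) + 1) / ((k + 2) * (k + 3)) *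
        ∑' n : ℕ, ((n : ℝ) + 2)⁻¹ ^ (k + 2) : ℝ) : ℂ) := by
    rw [riemannZeta_nat_add_two_sub_one]
    push_cast
    ring
  rw [tsum_congr hterm, ← Complex.ofReal_tsum, hasSum_coeff_mul_tsum_inv_pow.tsum_eq,
    deriv_riemannZeta_zero, Complex.ofReal_sub, Complex.ofReal_log (by positivity)]
  push_cast
  ring
end
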